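/- arXiv:math/0511526 — 6 statements merged into one kernel-verified Lean document; each statement's English description precedes it below -/
import Mathlib

section
/- For every real $M \geq 1$ and every $\beta \geq 0$, the inequality $1-\beta \leq 1 - \left(\frac{\beta}{\beta M + (1-\beta)}\right)^M$ holds, provided $\beta M + (1-\beta) > 0$. -/
/-!
Write `d = βM + (1 - β) = 1 + (M - 1)β ≥ 1`. Weighted AM-GM with weights `1/M` and `1 - 1/M` on
`1` and `β` gives `β ^ (1 - 1/M) ≤ d / M ≤ d`, i.e. `β ^ (M - 1) ≤ d ^ M`, and dividing `β ^ M`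
by both sides yields `(β / d) ^ M ≤ β`.
-/

open Real

section

variable {M β : ℝ}

lemma one_le_mul_add_one_sub (hM : 1 ≤ M) (hβ : 0 ≤ β) : 1 ≤ β * M + (1 - β) := by
  nlinarith

lemma rpow_one_sub_inv_le (hM : 1 ≤ M) (hβ : 0 ≤ β) :
    β ^ (1 - M⁻¹) ≤ (β * M + (1 - β)) / M := by
  have hM₀ : 0 < M := by linarith
  have hamgm := geom_mean_le_arith_mean2_weighted (inv_nonneg.2 hM₀.le)
    (sub_nonneg.2 (inv_le_one_of_one_le₀ hM)) zero_le_one hβ (add_sub_cancel M⁻¹ 1)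
  rw [one_rpow, one_mul] at hamgm
  calc β ^ (1 - M⁻¹) ≤ M⁻¹ * 1 + (1 - M⁻¹) * β := hamgm
    _ = (β * M + (1 - β)) / M := by field_simp; ring

lemma rpow_sub_one_le_rpow (hM : 1 ≤ M) (hβ : 0 ≤ β) :
    β ^ (M - 1) ≤ (β * M + (1 - β)) ^ M := by
  have hM₀ : 0 < M := by linarith
  have hd := one_le_mul_add_one_sub hM hβ
  calc β ^ (M - 1) = (β ^ (1 - M⁻¹)) ^ M := by
        rw [← rpow_mul hβ, sub_mul, inv_mul_cancel₀ hM₀.ne', one_mul]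
    _ ≤ ((β * M + (1 - β)) / M) ^ M := by
        gcongr
        exact rpow_one_sub_inv_le hM hβ
    _ ≤ (β * M + (1 - β)) ^ M := by
        gcongr
        exact div_le_self (by linarith) hM

lemma div_mul_add_one_sub_rpow_le (hM : 1 ≤ M) (hβ : 0 ≤ β) :
    (β / (β * M + (1 - β))) ^ M ≤ β := by
  rcases hβ.eq_or_lt with rfl | hβ₀
  · rw [zero_div, zero_rpow (by linarith)]
  have hd := one_le_mul_add_one_sub hM hβ
  calc (β / (β * M + (1 - β))) ^ M = β ^ M / (β * M + (1 - β)) ^ M :=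
        div_rpow hβ (by linarith) M
    _ ≤ β ^ M / β ^ (M - 1) := by
        gcongr
        exact rpow_sub_one_le_rpow hM hβ
    _ = β := by rw [← rpow_sub hβ₀, sub_sub_cancel, rpow_one]

end

theorem stmt_2_general (M β : ℝ) (hM : 1 ≤ M) (hβ : 0 ≤ β) :
    1 - β ≤ 1 - (β / (β * M + (1 - β))) ^ M := by
  linarith [div_mul_add_one_sub_rpow_le hM hβ]

/-- For real `M ≥ 1`, `β ≥ 0` with `βM + (1-β) > 0`,
`1 - β ≤ 1 - (β/(βM + (1-β)))^M`. -/
theorem stmt_2 (M β : ℝ) (hM : 1 ≤ M) (hβ : 0 ≤ β) (hpos : 0 < β * M + (1 - β)) :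
    1 - β ≤ 1 - (β / (β * M + (1 - β))) ^ M :=
  stmt_2_general M β hM hβ
end

section
/- Let $U, V$ be finite sets, $R \subseteq U \times V$, and let $\mu, \nu$ be probability measures on $U$ and $V$ respectively such that for every $A \subseteq U$, $\mu(A) \leq \nu(\{y \in V : \exists x \in A,\ x R y\})$. Then there exists a probability measure $\varphi$ on $U \times V$ whose first marginal is $\mu$, whose second marginal is $\nu$, and such that $\varphi(x,y) = 0$ whenever $\neg(x R y)$. -/
open Finset

set_option linter.unusedSectionVars false

namespace StrassenAux

variable {U V : Type*} [Fintype U] [Fintype V] [DecidableEq U] [DecidableEq V]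
variable (R : U → V → Prop) [∀ x y, Decidable (R x y)]

def NN (A : Finset U) : Finset V := univ.filter (fun y => ∃ x ∈ A, R x y)

lemma mem_NN {y : V} {A : Finset U} : y ∈ NN R A ↔ ∃ x ∈ A, R x y := by
  simp [NN]

lemma NN_mono {A B : Finset U} (h : A ⊆ B) : NN R A ⊆ NN R B := by
  intro y hy
  rw [mem_NN] at *
  obtain ⟨x, hx, hr⟩ := hy
  exact ⟨x, h hx, hr⟩

lemma NN_union (A B : Finset U) : NN R (A ∪ B) = NN R A ∪ NN R B := by
  ext y
  simp only [mem_NN, Finset.mem_union]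
  constructor
  · rintro ⟨x, hx, hr⟩
    rcases hx with h | h
    · exact Or.inl ⟨x, h, hr⟩
    · exact Or.inr ⟨x, h, hr⟩
  · rintro (⟨x, h, hr⟩ | ⟨x, h, hr⟩)
    · exact ⟨x, Or.inl h, hr⟩
    · exact ⟨x, Or.inr h, hr⟩

def Hall (μ : U → ℝ) (ν : V → ℝ) : Prop :=
  ∀ A : Finset U, ∑ x ∈ A, μ x ≤ ∑ y ∈ NN R A, ν y

def IsCoupling (μ : U → ℝ) (ν : V → ℝ) (φ : U → V → ℝ) : Prop :=
  (∀ x y, 0 ≤ φ x y) ∧ (∀ x, ∑ y, φ x y = μ x) ∧ (∀ y, ∑ x, φ x y = ν y) ∧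
    (∀ x y, ¬ R x y → φ x y = 0)

noncomputable def supp {α : Type*} [Fintype α] (μ : α → ℝ) : Finset α :=
  univ.filter (fun x => μ x ≠ 0)

lemma mem_supp {α : Type*} [Fintype α] {μ : α → ℝ} {x : α} : x ∈ supp μ ↔ μ x ≠ 0 := by
  simp [supp]

lemma coupling_add {μ₁ μ₂ : U → ℝ} {ν₁ ν₂ : V → ℝ} {φ₁ φ₂ : U → V → ℝ}
    (h₁ : IsCoupling R μ₁ ν₁ φ₁) (h₂ : IsCoupling R μ₂ ν₂ φ₂) :
    IsCoupling R (fun x => μ₁ x + μ₂ x) (fun y => ν₁ y + ν₂ y)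
      (fun x y => φ₁ x y + φ₂ x y) := by
  obtain ⟨p1, r1, c1, s1⟩ := h₁
  obtain ⟨p2, r2, c2, s2⟩ := h₂
  refine ⟨fun x y => add_nonneg (p1 x y) (p2 x y), fun x => ?_, fun y => ?_, fun x y h => ?_⟩
  · rw [Finset.sum_add_distrib, r1, r2]
  · rw [Finset.sum_add_distrib, c1, c2]
  · simp only []
    rw [s1 x y h, s2 x y h, add_zero]

lemma coupling_add_dirac {μ : U → ℝ} {ν : V → ℝ} {φ : U → V → ℝ} {x₀ : U} {y₀ : V} {t : ℝ}
    (h : IsCoupling R μ ν φ) (hR : R x₀ y₀) (ht : 0 ≤ t) :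
    IsCoupling R (fun x => μ x + if x = x₀ then t else 0)
      (fun y => ν y + if y = y₀ then t else 0)
      (fun x y => φ x y + if x = x₀ ∧ y = y₀ then t else 0) := by
  obtain ⟨p, r, c, s⟩ := h
  refine ⟨fun x y => ?_, fun x => ?_, fun y => ?_, fun x y hxy => ?_⟩
  · have : (0:ℝ) ≤ if x = x₀ ∧ y = y₀ then t else 0 := by positivity
    exact add_nonneg (p x y) this
  · rw [Finset.sum_add_distrib, r]
    congr 1
    by_cases hx : x = x₀ <;> simp [hx]
  · rw [Finset.sum_add_distrib, c]
    congr 1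
    by_cases hy : y = y₀ <;> simp [hy]
  · simp only []
    rw [s x y hxy]
    have : ¬ (x = x₀ ∧ y = y₀) := by
      rintro ⟨rfl, rfl⟩; exact hxy hR
    simp [this]

lemma sum_if_not_mem {α : Type*} [DecidableEq α] (s t : Finset α) (f : α → ℝ) :
    ∑ x ∈ s, (if x ∈ t then 0 else f x) = ∑ x ∈ s \ t, f x := by
  rw [Finset.sdiff_eq_filter, Finset.sum_filter]
  apply Finset.sum_congr rfl
  intro x _
  by_cases h : x ∈ t <;> simp [h]

lemma hall_restrict₁ {μ : U → ℝ} {ν : V → ℝ} (hν0 : ∀ y, 0 ≤ ν y)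
    (hall : Hall R μ ν) (A : Finset U) :
    Hall R (fun x => if x ∈ A then μ x else 0) (fun y => if y ∈ NN R A then ν y else 0) := by
  intro B
  rw [Finset.sum_ite_mem]
  calc ∑ x ∈ B ∩ A, μ x ≤ ∑ y ∈ NN R (B ∩ A), ν y := hall _
    _ = ∑ y ∈ NN R (B ∩ A), (if y ∈ NN R A then ν y else 0) := by
        apply Finset.sum_congr rfl
        intro y hy
        rw [if_pos (NN_mono R Finset.inter_subset_right hy)]
    _ ≤ ∑ y ∈ NN R B, (if y ∈ NN R A then ν y else 0) := by
        apply Finset.sum_le_sum_of_subset_of_nonneg (NN_mono R Finset.inter_subset_left)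
        intro y _ _
        by_cases h : y ∈ NN R A <;> simp [h, hν0 y]

lemma hall_restrict₂ {μ : U → ℝ} {ν : V → ℝ} (hμ0 : ∀ x, 0 ≤ μ x)
    (hall : Hall R μ ν) (A : Finset U) (htight : ∑ y ∈ NN R A, ν y ≤ ∑ x ∈ A, μ x) :
    Hall R (fun x => if x ∈ A then 0 else μ x) (fun y => if y ∈ NN R A then 0 else ν y) := by
  intro B
  rw [sum_if_not_mem, sum_if_not_mem]
  have h1 : ∑ x ∈ (B ∪ A) \ A, μ x + ∑ x ∈ A, μ x = ∑ x ∈ B ∪ A, μ x :=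
    Finset.sum_sdiff Finset.subset_union_right
  have h2 : ∑ y ∈ NN R (B ∪ A) \ NN R A, ν y + ∑ y ∈ NN R A, ν y = ∑ y ∈ NN R (B ∪ A), ν y :=
    Finset.sum_sdiff (NN_mono R Finset.subset_union_right)
  have h3 : (B ∪ A) \ A = B \ A := by
    ext x; simp only [Finset.mem_sdiff, Finset.mem_union]; tauto
  have h4 : NN R (B ∪ A) \ NN R A = NN R B \ NN R A := by
    rw [NN_union, Finset.union_sdiff_right]
  have h5 := hall (B ∪ A)
  rw [h3] at h1
  rw [h4] at h2
  linarith

lemma split_lemma (n : ℕ)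
    (IH : ∀ (μ : U → ℝ) (ν : V → ℝ), (∀ x, 0 ≤ μ x) → (∀ y, 0 ≤ ν y) →
      (∑ x, μ x = ∑ y, ν y) → Hall R μ ν → (supp μ).card + (supp ν).card ≤ n →
      ∃ φ, IsCoupling R μ ν φ)
    (μ : U → ℝ) (ν : V → ℝ) (hμ0 : ∀ x, 0 ≤ μ x) (hν0 : ∀ y, 0 ≤ ν y)
    (hmass : ∑ x, μ x = ∑ y, ν y) (hall : Hall R μ ν)
    (A : Finset U) (hA0 : 0 < ∑ x ∈ A, μ x) (hAlt : ∑ x ∈ A, μ x < ∑ x, μ x)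
    (htight : ∑ y ∈ NN R A, ν y = ∑ x ∈ A, μ x)
    (hcard : (supp μ).card + (supp ν).card ≤ n + 1) :
    ∃ φ, IsCoupling R μ ν φ := by
  set μ₁ : U → ℝ := fun x => if x ∈ A then μ x else 0 with hμ₁
  set ν₁ : V → ℝ := fun y => if y ∈ NN R A then ν y else 0 with hν₁
  set μ₂ : U → ℝ := fun x => if x ∈ A then 0 else μ x with hμ₂
  set ν₂ : V → ℝ := fun y => if y ∈ NN R A then 0 else ν y with hν₂
  -- basic sum identities
  have sμ₁ : ∑ x, μ₁ x = ∑ x ∈ A, μ x := by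
    rw [hμ₁]; rw [Finset.sum_ite_mem, Finset.univ_inter]
  have sν₁ : ∑ y, ν₁ y = ∑ y ∈ NN R A, ν y := by
    rw [hν₁]; rw [Finset.sum_ite_mem, Finset.univ_inter]
  have sμ₂ : ∑ x, μ₂ x = ∑ x, μ x - ∑ x ∈ A, μ x := by
    have : ∑ x, (μ₁ x + μ₂ x) = ∑ x, μ x := by
      apply Finset.sum_congr rfl; intro x _
      by_cases h : x ∈ A <;> simp [hμ₁, hμ₂, h]
    rw [Finset.sum_add_distrib, sμ₁] at this
    linarith
  have sν₂ : ∑ y, ν₂ y = ∑ y, ν y - ∑ y ∈ NN R A, ν y := by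
    have : ∑ y, (ν₁ y + ν₂ y) = ∑ y, ν y := by
      apply Finset.sum_congr rfl; intro y _
      by_cases h : y ∈ NN R A <;> simp [hν₁, hν₂, h]
    rw [Finset.sum_add_distrib, sν₁] at this
    linarith
  -- witnesses for strict support decrease
  have hx₁ : ∃ x ∈ univ \ A, μ x ≠ 0 := by
    apply Finset.exists_ne_zero_of_sum_ne_zero
    have h := Finset.sum_sdiff (Finset.subset_univ A) (f := μ)
    have : (0:ℝ) < ∑ x ∈ univ \ A, μ x := by linarith
    linarith
  obtain ⟨x₁, hx₁A, hx₁ne⟩ := hx₁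
  rw [Finset.mem_sdiff] at hx₁A
  have hx₁A : x₁ ∉ A := hx₁A.2
  have hy₁ : ∃ y ∈ NN R A, ν y ≠ 0 := by
    apply Finset.exists_ne_zero_of_sum_ne_zero
    rw [htight]; linarith
  obtain ⟨y₁, hy₁A, hy₁ne⟩ := hy₁
  -- support inclusions
  have hsupp_μ₁ : supp μ₁ ⊆ (supp μ).erase x₁ := by
    intro x hx
    rw [mem_supp] at hx
    have hxA : x ∈ A ∧ μ x ≠ 0 := by
      by_cases h : x ∈ A
      · exact ⟨h, by simpa [hμ₁, h] using hx⟩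
      · exfalso; apply hx; simp [hμ₁, h]
    rw [Finset.mem_erase, mem_supp]
    exact ⟨fun h => hx₁A (h ▸ hxA.1), hxA.2⟩
  have hsupp_ν₁ : supp ν₁ ⊆ supp ν := by
    intro y hy
    rw [mem_supp] at hy ⊢
    intro h; apply hy
    by_cases hyA : y ∈ NN R A <;> simp [hν₁, hyA, h]
  have hsupp_μ₂ : supp μ₂ ⊆ supp μ := by
    intro x hx
    rw [mem_supp] at hx ⊢
    intro h; apply hx
    by_cases hxA : x ∈ A <;> simp [hμ₂, hxA, h]
  have hsupp_ν₂ : supp ν₂ ⊆ (supp ν).erase y₁ := by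
    intro y hy
    rw [mem_supp] at hy
    have hyA : y ∉ NN R A ∧ ν y ≠ 0 := by
      by_cases h : y ∈ NN R A
      · exfalso; apply hy; simp [hν₂, h]
      · exact ⟨h, by simpa [hν₂, h] using hy⟩
    rw [Finset.mem_erase, mem_supp]
    exact ⟨fun h => hyA.1 (h ▸ hy₁A), hyA.2⟩
  have hx₁supp : x₁ ∈ supp μ := mem_supp.2 hx₁ne
  have hy₁supp : y₁ ∈ supp ν := mem_supp.2 hy₁ne
  -- cardinality bounds
  have hcard₁ : (supp μ₁).card + (supp ν₁).card ≤ n := by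
    have a1 : (supp μ₁).card ≤ ((supp μ).erase x₁).card := Finset.card_le_card hsupp_μ₁
    have a2 : ((supp μ).erase x₁).card = (supp μ).card - 1 := Finset.card_erase_of_mem hx₁supp
    have a3 : 1 ≤ (supp μ).card := Finset.card_pos.2 ⟨x₁, hx₁supp⟩
    have a4 : (supp ν₁).card ≤ (supp ν).card := Finset.card_le_card hsupp_ν₁
    omega
  have hcard₂ : (supp μ₂).card + (supp ν₂).card ≤ n := by
    have a1 : (supp ν₂).card ≤ ((supp ν).erase y₁).card := Finset.card_le_card hsupp_ν₂
    have a2 : ((supp ν).erase y₁).card = (supp ν).card - 1 := Finset.card_erase_of_mem hy₁supp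
    have a3 : 1 ≤ (supp ν).card := Finset.card_pos.2 ⟨y₁, hy₁supp⟩
    have a4 : (supp μ₂).card ≤ (supp μ).card := Finset.card_le_card hsupp_μ₂
    omega
  -- apply IH to the two subproblems
  have hμ₁0 : ∀ x, 0 ≤ μ₁ x := by
    intro x; by_cases h : x ∈ A <;> simp [hμ₁, h, hμ0 x]
  have hν₁0 : ∀ y, 0 ≤ ν₁ y := by
    intro y; by_cases h : y ∈ NN R A <;> simp [hν₁, h, hν0 y]
  have hμ₂0 : ∀ x, 0 ≤ μ₂ x := by
    intro x; by_cases h : x ∈ A <;> simp [hμ₂, h, hμ0 x]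
  have hν₂0 : ∀ y, 0 ≤ ν₂ y := by
    intro y; by_cases h : y ∈ NN R A <;> simp [hν₂, h, hν0 y]
  obtain ⟨φ₁, hφ₁⟩ := IH μ₁ ν₁ hμ₁0 hν₁0 (by rw [sμ₁, sν₁, htight])
    (hall_restrict₁ R hν0 hall A) hcard₁
  obtain ⟨φ₂, hφ₂⟩ := IH μ₂ ν₂ hμ₂0 hν₂0 (by rw [sμ₂, sν₂]; linarith)
    (hall_restrict₂ R hμ0 hall A (le_of_eq htight)) hcard₂
  refine ⟨fun x y => φ₁ x y + φ₂ x y, ?_⟩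
  have h := coupling_add R hφ₁ hφ₂
  have hμeq : (fun x => μ₁ x + μ₂ x) = μ := by
    funext x; by_cases h : x ∈ A <;> simp [hμ₁, hμ₂, h]
  have hνeq : (fun y => ν₁ y + ν₂ y) = ν := by
    funext y; by_cases h : y ∈ NN R A <;> simp [hν₁, hν₂, h]
  rwa [hμeq, hνeq] at h

lemma zero_coupling (μ : U → ℝ) (ν : V → ℝ) (hν0 : ∀ y, 0 ≤ ν y)
    (hμz : ∀ x, μ x = 0) (hmass : ∑ x, μ x = ∑ y, ν y) :
    ∃ φ, IsCoupling R μ ν φ := by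
  have hνsum : ∑ y, ν y = 0 := by
    rw [← hmass]; simp [hμz]
  have hνz : ∀ y, ν y = 0 := by
    intro y
    exact (Finset.sum_eq_zero_iff_of_nonneg (fun y _ => hν0 y)).1 hνsum y (Finset.mem_univ y)
  exact ⟨fun _ _ => 0, fun _ _ => le_refl 0, fun x => by simp [hμz x],
    fun y => by simp [hνz y], fun _ _ _ => rfl⟩

lemma main_aux : ∀ (n : ℕ) (μ : U → ℝ) (ν : V → ℝ), (∀ x, 0 ≤ μ x) → (∀ y, 0 ≤ ν y) →
    (∑ x, μ x = ∑ y, ν y) → Hall R μ ν → (supp μ).card + (supp ν).card ≤ n →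
    ∃ φ, IsCoupling R μ ν φ := by
  intro n
  induction n with
  | zero =>
    intro μ ν hμ0 hν0 hmass hall hcard
    apply zero_coupling R μ ν hν0 _ hmass
    intro x
    by_contra h
    have h1 : x ∈ supp μ := mem_supp.2 h
    have h2 : 0 < (supp μ).card := Finset.card_pos.2 ⟨x, h1⟩
    omega
  | succ n IH =>
    intro μ ν hμ0 hν0 hmass hall hcard
    by_cases hS : ∀ x, μ x = 0
    · exact zero_coupling R μ ν hν0 hS hmass
    push_neg at hS
    obtain ⟨x₀, hx₀ne⟩ := hS
    have hx₀pos : 0 < μ x₀ := lt_of_le_of_ne (hμ0 x₀) (Ne.symm hx₀ne)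
    by_cases htight : ∃ A : Finset U, 0 < ∑ x ∈ A, μ x ∧ ∑ x ∈ A, μ x < ∑ x, μ x ∧
        ∑ y ∈ NN R A, ν y = ∑ x ∈ A, μ x
    · obtain ⟨A, h1, h2, h3⟩ := htight
      exact split_lemma R n IH μ ν hμ0 hν0 hmass hall A h1 h2 h3 hcard
    push_neg at htight
    have hstrict : ∀ A : Finset U, 0 < ∑ x ∈ A, μ x → ∑ x ∈ A, μ x < ∑ x, μ x →
        ∑ x ∈ A, μ x < ∑ y ∈ NN R A, ν y := by
      intro A h1 h2
      exact lt_of_le_of_ne (hall A) (fun h => htight A h1 h2 h.symm)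
    -- pick y₀ related to x₀ with positive mass
    have hy₀ex : ∃ y ∈ NN R {x₀}, ν y ≠ 0 := by
      apply Finset.exists_ne_zero_of_sum_ne_zero
      have h := hall {x₀}
      rw [Finset.sum_singleton] at h
      linarith
    obtain ⟨y₀, hy₀mem, hy₀ne⟩ := hy₀ex
    have hRx₀y₀ : R x₀ y₀ := by
      rw [mem_NN] at hy₀mem
      obtain ⟨x, hx, hr⟩ := hy₀mem
      rw [Finset.mem_singleton] at hx
      exact hx ▸ hr
    have hy₀pos : 0 < ν y₀ := lt_of_le_of_ne (hν0 y₀) (Ne.symm hy₀ne)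
    -- the family of critical sets and the transfer amount t
    set slack : Finset U → ℝ := fun A => ∑ y ∈ NN R A, ν y - ∑ x ∈ A, μ x with hslackdef
    set 𝒜 : Finset (Finset U) :=
      univ.filter (fun A => x₀ ∉ A ∧ y₀ ∈ NN R A) with h𝒜def
    have hmem𝒜 : ∀ A, A ∈ 𝒜 ↔ x₀ ∉ A ∧ y₀ ∈ NN R A := by
      intro A; rw [h𝒜def]; simp
    have hμAlt : ∀ A : Finset U, x₀ ∉ A → ∑ x ∈ A, μ x ≤ ∑ x, μ x - μ x₀ := by
      intro A hx₀A
      have hsub : A ⊆ univ.erase x₀ := by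
        intro a ha
        rw [Finset.mem_erase]
        exact ⟨fun h => hx₀A (h ▸ ha), Finset.mem_univ a⟩
      have h1 := Finset.sum_le_sum_of_subset_of_nonneg hsub (fun i _ _ => hμ0 i)
      have he : ∑ x ∈ univ.erase x₀, μ x = ∑ x, μ x - μ x₀ :=
        Finset.sum_erase_eq_sub (Finset.mem_univ x₀)
      linarith
    have hslackpos : ∀ A ∈ 𝒜, 0 < slack A := by
      intro A hA
      rw [hmem𝒜] at hA
      obtain ⟨hx₀A, hy₀A⟩ := hA
      have hApos' : ∑ x ∈ A, μ x < ∑ x, μ x := by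
        have := hμAlt A hx₀A
        linarith
      have hy₀le : ν y₀ ≤ ∑ y ∈ NN R A, ν y :=
        Finset.single_le_sum (fun y _ => hν0 y) hy₀A
      rw [hslackdef]
      simp only []
      rcases eq_or_lt_of_le (Finset.sum_nonneg (fun x (_ : x ∈ A) => hμ0 x)) with h0 | h0
      · rw [← h0]; linarith
      · have := hstrict A h0 hApos'
        linarith
    set t : ℝ := if h : 𝒜.Nonempty then min (min (μ x₀) (ν y₀)) (𝒜.inf' h slack)
      else min (μ x₀) (ν y₀) with htdef
    have ht_pos : 0 < t := by
      rw [htdef]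
      split_ifs with h
      · exact lt_min (lt_min hx₀pos hy₀pos) ((Finset.lt_inf'_iff h).2 hslackpos)
      · exact lt_min hx₀pos hy₀pos
    have ht_le_μ : t ≤ μ x₀ := by
      rw [htdef]
      split_ifs with h
      · exact le_trans (min_le_left _ _) (min_le_left _ _)
      · exact min_le_left _ _
    have ht_le_ν : t ≤ ν y₀ := by
      rw [htdef]
      split_ifs with h
      · exact le_trans (min_le_left _ _) (min_le_right _ _)
      · exact min_le_right _ _
    have ht_le_slack : ∀ A ∈ 𝒜, t ≤ slack A := by
      intro A hA
      rw [htdef, dif_pos ⟨A, hA⟩]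
      exact le_trans (min_le_right _ _) (Finset.inf'_le slack hA)
    have hcases : t = μ x₀ ∨ t = ν y₀ ∨ ∃ A ∈ 𝒜, t = slack A := by
      rw [htdef]
      split_ifs with h
      · rcases min_cases (min (μ x₀) (ν y₀)) (𝒜.inf' h slack) with ⟨heq, _⟩ | ⟨heq, _⟩
        · rw [heq]
          rcases min_cases (μ x₀) (ν y₀) with ⟨h2, _⟩ | ⟨h2, _⟩
          · exact Or.inl h2
          · exact Or.inr (Or.inl h2)
        · obtain ⟨A, hA, hAeq⟩ := Finset.exists_mem_eq_inf' h slack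
          exact Or.inr (Or.inr ⟨A, hA, by rw [heq, hAeq]⟩)
      · rcases min_cases (μ x₀) (ν y₀) with ⟨h2, _⟩ | ⟨h2, _⟩
        · exact Or.inl h2
        · exact Or.inr (Or.inl h2)
    -- the reduced measures
    set μ' : U → ℝ := fun x => μ x - if x = x₀ then t else 0 with hμ'def
    set ν' : V → ℝ := fun y => ν y - if y = y₀ then t else 0 with hν'def
    have hsumμ' : ∀ B : Finset U, ∑ x ∈ B, μ' x = ∑ x ∈ B, μ x - (if x₀ ∈ B then t else 0) := by
      intro B
      rw [hμ'def]
      simp only []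
      rw [Finset.sum_sub_distrib]
      congr 1
      exact Finset.sum_ite_eq' B x₀ (fun _ => t)
    have hsumν' : ∀ C : Finset V, ∑ y ∈ C, ν' y = ∑ y ∈ C, ν y - (if y₀ ∈ C then t else 0) := by
      intro C
      rw [hν'def]
      simp only []
      rw [Finset.sum_sub_distrib]
      congr 1
      exact Finset.sum_ite_eq' C y₀ (fun _ => t)
    have hμ'0 : ∀ x, 0 ≤ μ' x := by
      intro x
      rw [hμ'def]
      simp only []
      by_cases h : x = x₀
      · rw [if_pos h]; subst h; linarith
      · rw [if_neg h]; linarith [hμ0 x]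
    have hν'0 : ∀ y, 0 ≤ ν' y := by
      intro y
      rw [hν'def]
      simp only []
      by_cases h : y = y₀
      · rw [if_pos h]; subst h; linarith
      · rw [if_neg h]; linarith [hν0 y]
    have hmass' : ∑ x, μ' x = ∑ y, ν' y := by
      rw [hsumμ' univ, hsumν' univ, if_pos (Finset.mem_univ x₀), if_pos (Finset.mem_univ y₀),
        hmass]
    have hall' : Hall R μ' ν' := by
      intro B
      rw [hsumμ' B, hsumν' (NN R B)]
      by_cases hx₀B : x₀ ∈ B
      · have hy₀NNB : y₀ ∈ NN R B := (mem_NN R).2 ⟨x₀, hx₀B, hRx₀y₀⟩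
        rw [if_pos hx₀B, if_pos hy₀NNB]
        have := hall B
        linarith
      · rw [if_neg hx₀B]
        by_cases hy₀NNB : y₀ ∈ NN R B
        · have hB𝒜 : B ∈ 𝒜 := (hmem𝒜 B).2 ⟨hx₀B, hy₀NNB⟩
          have hts := ht_le_slack B hB𝒜
          rw [hslackdef] at hts
          simp only [] at hts
          rw [if_pos hy₀NNB]
          linarith
        · rw [if_neg hy₀NNB]
          have := hall B
          linarith
    -- generic support inclusions
    have hsuppμ'_gen : supp μ' ⊆ supp μ := by
      intro x hx
      rw [mem_supp] at hx ⊢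
      by_cases h : x = x₀
      · subst h; exact hx₀ne
      · intro hc; apply hx; rw [hμ'def]; simp [h, hc]
    have hsuppν'_gen : supp ν' ⊆ supp ν := by
      intro y hy
      rw [mem_supp] at hy ⊢
      by_cases h : y = y₀
      · subst h; exact hy₀ne
      · intro hc; apply hy; rw [hν'def]; simp [h, hc]
    have hx₀supp : x₀ ∈ supp μ := mem_supp.2 hx₀ne
    have hy₀supp : y₀ ∈ supp ν := mem_supp.2 hy₀ne
    -- combining: a coupling of μ' ν' yields one of μ ν
    have key : (∃ φ', IsCoupling R μ' ν' φ') → ∃ φ, IsCoupling R μ ν φ := by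
      rintro ⟨φ', hφ'⟩
      have h := coupling_add_dirac R hφ' hRx₀y₀ ht_pos.le
      have hμeq : (fun x => μ' x + if x = x₀ then t else 0) = μ := by
        funext x
        rw [hμ'def]
        by_cases hx : x = x₀ <;> simp [hx]
      have hνeq : (fun y => ν' y + if y = y₀ then t else 0) = ν := by
        funext y
        rw [hν'def]
        by_cases hy : y = y₀ <;> simp [hy]
      rw [hμeq, hνeq] at h
      exact ⟨_, h⟩
    apply key
    by_cases hc1 : t = μ x₀
    · -- x₀ leaves the support
      have hsuppμ' : supp μ' ⊆ (supp μ).erase x₀ := by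
        intro x hx
        rw [mem_supp] at hx
        rw [Finset.mem_erase, mem_supp]
        by_cases h : x = x₀
        · exfalso
          apply hx
          rw [hμ'def]
          simp only []
          rw [if_pos h]
          subst h
          linarith
        · refine ⟨h, fun hc => hx ?_⟩
          rw [hμ'def]; simp [h, hc]
      have hcard' : (supp μ').card + (supp ν').card ≤ n := by
        have a1 : (supp μ').card ≤ ((supp μ).erase x₀).card := Finset.card_le_card hsuppμ'
        have a2 : ((supp μ).erase x₀).card = (supp μ).card - 1 :=
          Finset.card_erase_of_mem hx₀supp
        have a3 : 1 ≤ (supp μ).card := Finset.card_pos.2 ⟨x₀, hx₀supp⟩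
        have a4 : (supp ν').card ≤ (supp ν).card := Finset.card_le_card hsuppν'_gen
        omega
      exact IH μ' ν' hμ'0 hν'0 hmass' hall' hcard'
    by_cases hc2 : t = ν y₀
    · have hsuppν' : supp ν' ⊆ (supp ν).erase y₀ := by
        intro y hy
        rw [mem_supp] at hy
        rw [Finset.mem_erase, mem_supp]
        by_cases h : y = y₀
        · exfalso
          apply hy
          rw [hν'def]
          simp only []
          rw [if_pos h]
          subst h
          linarith
        · refine ⟨h, fun hc => hy ?_⟩
          rw [hν'def]; simp [h, hc]
      have hcard' : (supp μ').card + (supp ν').card ≤ n := by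
        have a1 : (supp ν').card ≤ ((supp ν).erase y₀).card := Finset.card_le_card hsuppν'
        have a2 : ((supp ν).erase y₀).card = (supp ν).card - 1 :=
          Finset.card_erase_of_mem hy₀supp
        have a3 : 1 ≤ (supp ν).card := Finset.card_pos.2 ⟨y₀, hy₀supp⟩
        have a4 : (supp μ').card ≤ (supp μ).card := Finset.card_le_card hsuppμ'_gen
        omega
      exact IH μ' ν' hμ'0 hν'0 hmass' hall' hcard'
    -- t is the slack of some critical set, which becomes tight
    obtain ⟨A, hA𝒜, hAt⟩ : ∃ A ∈ 𝒜, t = slack A := by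
      rcases hcases with h | h | h
      · exact absurd h hc1
      · exact absurd h hc2
      · exact h
    have ht_lt_μ : t < μ x₀ := lt_of_le_of_ne ht_le_μ hc1
    have ht_lt_ν : t < ν y₀ := lt_of_le_of_ne ht_le_ν hc2
    rw [hmem𝒜] at hA𝒜
    obtain ⟨hx₀A, hy₀A⟩ := hA𝒜
    rw [hslackdef] at hAt
    simp only [] at hAt
    have hy₀le : ν y₀ ≤ ∑ y ∈ NN R A, ν y :=
      Finset.single_le_sum (fun y _ => hν0 y) hy₀A
    have hμ'A : ∑ x ∈ A, μ' x = ∑ x ∈ A, μ x := by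
      rw [hsumμ' A, if_neg hx₀A, sub_zero]
    have hμ'Apos : 0 < ∑ x ∈ A, μ' x := by
      rw [hμ'A]
      linarith
    have hμ'Alt : ∑ x ∈ A, μ' x < ∑ x, μ' x := by
      rw [hμ'A, hsumμ' univ, if_pos (Finset.mem_univ x₀)]
      have := hμAlt A hx₀A
      linarith
    have htight' : ∑ y ∈ NN R A, ν' y = ∑ x ∈ A, μ' x := by
      rw [hsumν' (NN R A), if_pos hy₀A, hμ'A]
      linarith
    have hcard' : (supp μ').card + (supp ν').card ≤ n + 1 := by
      have a1 : (supp μ').card ≤ (supp μ).card := Finset.card_le_card hsuppμ'_gen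
      have a2 : (supp ν').card ≤ (supp ν).card := Finset.card_le_card hsuppν'_gen
      omega
    exact split_lemma R n IH μ' ν' hμ'0 hν'0 hmass' hall' A hμ'Apos hμ'Alt htight' hcard'

end StrassenAux


/-- Strassen's coupling lemma for finite sets: if `μ(A) ≤ ν(R(A))` for every
`A ⊆ U`, there is a coupling of `μ` and `ν` supported on the relation `R`. -/
theorem stmt_5 {U V : Type*} [Fintype U] [Fintype V] [DecidableEq U]
    (R : U → V → Prop) [∀ x y, Decidable (R x y)]
    (μ : U → ℝ) (ν : V → ℝ)
    (hμ0 : ∀ x, 0 ≤ μ x) (hν0 : ∀ y, 0 ≤ ν y)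
    (hμ1 : ∑ x, μ x = 1) (hν1 : ∑ y, ν y = 1)
    (hall : ∀ A : Finset U,
      ∑ x ∈ A, μ x ≤ ∑ y ∈ Finset.univ.filter (fun y => ∃ x ∈ A, R x y), ν y) :
    ∃ φ : U → V → ℝ,
      (∀ x y, 0 ≤ φ x y) ∧
      (∀ x, ∑ y, φ x y = μ x) ∧
      (∀ y, ∑ x, φ x y = ν y) ∧
      (∀ x y, ¬ R x y → φ x y = 0) := by
  classical
  have hall' : StrassenAux.Hall R μ ν := by
    intro A
    exact hall A
  obtain ⟨φ, hφ⟩ := StrassenAux.main_aux R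
    ((StrassenAux.supp μ).card + (StrassenAux.supp ν).card) μ ν hμ0 hν0
    (by rw [hμ1, hν1]) hall' le_rfl
  exact ⟨φ, hφ⟩
end

section
/- Fix $K > 0$ and let $f(w) = \frac{(1-w)K}{w^2 + (1-w^2)K} - 1$. Then the unique solution $y(t)$ of the ODE $y' = f(y)$ with $y(0)=1$ satisfies $\exp(-t/\min\{1,K\}) \leq y(t) \leq \exp(-t/\max\{1,K\})$ for all $t \geq 0$. -/
/-!
For `0 ≤ w ≤ 1` the right-hand side `f(w)` is squeezed between `-w / min 1 K` and
`-w / max 1 K`: after clearing denominators the gaps factor as products such as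
`(1 - w) w² (K - 1)` and `w (1 - K) (w² + K (1 - w))`. Hence, as long as `y` stays in `[0, 1]`,
Grönwall's inequality compares `y` with the two exponentials. Conversely, the exponential bounds
keep `y` in `(0, 1]`, and `y` leaves `1` downwards since `f(1) = -1`; a continuous induction
on `[0, t]` closes the circle.
-/

open Set Filter Topology Real

theorem le_mul_exp_of_deriv_right_le {f f' : ℝ → ℝ} {c a b : ℝ} (hf : ContinuousOn f (Icc a b))
    (hf' : ∀ x ∈ Ico a b, HasDerivWithinAt f (f' x) (Ici x) x)
    (bound : ∀ x ∈ Ico a b, f' x ≤ c * f x) :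
    ∀ x ∈ Icc a b, f x ≤ f a * exp (c * (x - a)) := by
  intro x hx
  simpa only [gronwallBound_ε0] using
    le_gronwallBound_of_liminf_deriv_right_le (K := c) (ε := 0) hf
      (fun x hx _ hr => (hf' x hx).liminf_right_slope_le hr) le_rfl
      (by simpa only [add_zero] using bound) x hx

theorem mul_exp_le_of_le_deriv_right {f f' : ℝ → ℝ} {c a b : ℝ} (hf : ContinuousOn f (Icc a b))
    (hf' : ∀ x ∈ Ico a b, HasDerivWithinAt f (f' x) (Ici x) x)
    (bound : ∀ x ∈ Ico a b, c * f x ≤ f' x) :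
    ∀ x ∈ Icc a b, f a * exp (c * (x - a)) ≤ f x := by
  intro x hx
  have := le_mul_exp_of_deriv_right_le (f := fun t => -f t) (f' := fun t => -f' t) hf.neg
    (fun x hx => (hf' x hx).neg) (fun x hx => by linarith [bound x hx]) x hx
  linarith

noncomputable def odeRhs (K w : ℝ) : ℝ := (1 - w) * K / (w ^ 2 + (1 - w ^ 2) * K) - 1

theorem odeRhs_one (K : ℝ) : odeRhs K 1 = -1 := by
  simp [odeRhs]

section Bounds

variable {K w : ℝ}

theorem odeRhs_denom_pos (hK : 0 < K) (hw0 : 0 ≤ w) (hw1 : w ≤ 1) :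
    0 < w ^ 2 + (1 - w ^ 2) * K := by
  rcases hw0.eq_or_lt with rfl | hw
  · simpa using hK
  · nlinarith [mul_nonneg (sub_nonneg.2 (pow_le_one₀ hw0 hw1 : w ^ 2 ≤ 1)) hK.le]

theorem neg_div_min_le_odeRhs (hK : 0 < K) (hw0 : 0 ≤ w) (hw1 : w ≤ 1) :
    -w / min 1 K ≤ odeRhs K w := by
  have hm : 0 < min 1 K := lt_min one_pos hK
  rw [odeRhs, le_sub_iff_add_le, div_add_one hm.ne',
    div_le_div_iff₀ hm (odeRhs_denom_pos hK hw0 hw1)]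
  rcases le_total 1 K with h | h
  · rw [min_eq_left h]
    nlinarith [mul_nonneg (mul_nonneg (sub_nonneg.2 hw1) (sq_nonneg w)) (sub_nonneg.2 h)]
  · rw [min_eq_right h]
    nlinarith [mul_nonneg (mul_nonneg hw0 (sub_nonneg.2 h))
      (add_nonneg (sq_nonneg w) (mul_nonneg hK.le (sub_nonneg.2 hw1)))]

theorem odeRhs_le_neg_div_max (hK : 0 < K) (hw0 : 0 ≤ w) (hw1 : w ≤ 1) :
    odeRhs K w ≤ -w / max 1 K := by
  have hM : 0 < max 1 K := lt_max_of_lt_left one_pos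
  rw [odeRhs, sub_le_iff_le_add, div_add_one hM.ne',
    div_le_div_iff₀ (odeRhs_denom_pos hK hw0 hw1) hM]
  rcases le_total 1 K with h | h
  · rw [max_eq_right h]
    nlinarith [mul_nonneg (mul_nonneg hw0 (sub_nonneg.2 h))
      (add_nonneg (sq_nonneg w) (mul_nonneg hK.le (sub_nonneg.2 hw1)))]
  · rw [max_eq_left h]
    nlinarith [mul_nonneg (mul_nonneg (sub_nonneg.2 hw1) (sq_nonneg w)) (sub_nonneg.2 h)]

end Bounds

def ExpBounds (K : ℝ) (y : ℝ → ℝ) (t : ℝ) : Prop :=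
  exp (-t / min 1 K) ≤ y t ∧ y t ≤ exp (-t / max 1 K)

section Solution

variable {K : ℝ} {y : ℝ → ℝ}

theorem ExpBounds.mem_Ioc {t : ℝ} (h : ExpBounds K y t) (ht : 0 ≤ t) : y t ∈ Ioc 0 1 :=
  ⟨(exp_pos _).trans_le h.1, h.2.trans (exp_le_one_iff.2
    (div_nonpos_of_nonpos_of_nonneg (neg_nonpos.2 ht) (zero_le_one.trans (le_max_left 1 K))))⟩

variable (hy : ∀ t, 0 ≤ t → HasDerivAt y (odeRhs K (y t)) t)
include hy

theorem eventually_mem_Icc_of_mem_Ioc {x : ℝ} (hx : 0 ≤ x) (h : y x ∈ Ioc 0 1) :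
    ∀ᶠ t in 𝓝[>] x, y t ∈ Icc 0 1 := by
  have hcont := (hy x hx).continuousAt
  have hpos : ∀ᶠ t in 𝓝[>] x, 0 ≤ y t :=
    ((hcont.eventually (lt_mem_nhds h.1)).filter_mono nhdsWithin_le_nhds).mono fun _ => le_of_lt
  have hle : ∀ᶠ t in 𝓝[>] x, y t ≤ 1 := by
    rcases h.2.lt_or_eq with hlt | heq
    · exact ((hcont.eventually (gt_mem_nhds hlt)).filter_mono nhdsWithin_le_nhds).mono
        fun _ => le_of_lt
    · have hd := hy x hx
      rw [heq, odeRhs_one] at hd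
      filter_upwards [hd.hasDerivWithinAt.limsup_slope_le' (lt_irrefl x) neg_one_lt_zero,
        self_mem_nhdsWithin] with t hslope ht
      exact heq ▸ ((slope_neg_iff_of_le (le_of_lt ht)).1 hslope).le
  filter_upwards [hpos, hle] with t h0 h1 using ⟨h0, h1⟩

theorem ExpBounds.of_mem_Icc (hK : 0 < K) {x b : ℝ} (hx : 0 ≤ x) (hbx : ExpBounds K y x)
    (hrange : ∀ t ∈ Ico x b, y t ∈ Icc 0 1) : ∀ t ∈ Icc x b, ExpBounds K y t := by
  have hcont : ContinuousOn y (Icc x b) := fun t ht =>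
    (hy t (hx.trans ht.1)).continuousAt.continuousWithinAt
  have hderiv : ∀ t ∈ Ico x b, HasDerivWithinAt y (odeRhs K (y t)) (Ici t) t := fun t ht =>
    (hy t (hx.trans ht.1)).hasDerivWithinAt
  have hshift (c : ℝ) (t : ℝ) : exp (-t / c) = exp (-x / c) * exp (-1 / c * (t - x)) := by
    rw [← exp_add]
    congr 1
    ring
  intro t ht
  constructor
  · calc exp (-t / min 1 K) = exp (-x / min 1 K) * exp (-1 / min 1 K * (t - x)) := hshift _ t
      _ ≤ y x * exp (-1 / min 1 K * (t - x)) := by gcongr; exact hbx.1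
      _ ≤ y t := mul_exp_le_of_le_deriv_right hcont hderiv (fun s hs =>
          (neg_div_min_le_odeRhs hK (hrange s hs).1 (hrange s hs).2).trans_eq' (by ring)) t ht
  · calc y t ≤ y x * exp (-1 / max 1 K * (t - x)) := le_mul_exp_of_deriv_right_le hcont hderiv
          (fun s hs => (odeRhs_le_neg_div_max hK (hrange s hs).1 (hrange s hs).2).trans_eq
            (by ring)) t ht
      _ ≤ exp (-x / max 1 K) * exp (-1 / max 1 K * (t - x)) := by gcongr; exact hbx.2
      _ = exp (-t / max 1 K) := (hshift _ t).symm

theorem expBounds_of_nonneg (hK : 0 < K) (hy0 : y 0 = 1) {t : ℝ} (ht : 0 ≤ t) :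
    ExpBounds K y t := by
  have hcont : ContinuousOn y (Icc 0 t) := fun s hs =>
    (hy s hs.1).continuousAt.continuousWithinAt
  have hclosed : IsClosed ({s | ExpBounds K y s} ∩ Icc 0 t) := by
    have hlo := isClosed_Icc.isClosed_le
      (by fun_prop : Continuous fun s => exp (-s / min 1 K)).continuousOn hcont
    have hhi := isClosed_Icc.isClosed_le hcont
      (by fun_prop : Continuous fun s => exp (-s / max 1 K)).continuousOn
    convert hlo.inter hhi using 1
    ext s
    simp only [ExpBounds, mem_inter_iff, mem_ofPred_eq]
    tauto
  have h0 : ExpBounds K y 0 := by simp [ExpBounds, hy0]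
  refine hclosed.Icc_subset_of_forall_mem_nhdsWithin h0 ?_ ⟨ht, le_rfl⟩
  rintro x ⟨hxS, hx0, -⟩
  obtain ⟨b, hxb, hsub⟩ :=
    mem_nhdsGT_iff_exists_Ioo_subset.1 (eventually_mem_Icc_of_mem_Ioc hy hx0 (hxS.mem_Ioc hx0))
  filter_upwards [Ioo_mem_nhdsGT hxb] with s hs
  refine hxS.of_mem_Icc hy hK hx0 (fun r hr => ?_) s (Ioo_subset_Icc_self hs)
  rcases hr.1.eq_or_lt with rfl | hxr
  · exact Ioc_subset_Icc_self (hxS.mem_Ioc hx0)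
  · exact hsub ⟨hxr, hr.2⟩

end Solution

/-- The solution of `y' = (1-y)K/(y² + (1-y²)K) - 1`, `y(0) = 1`, satisfies
`exp(-t/min{1,K}) ≤ y(t) ≤ exp(-t/max{1,K})` for all `t ≥ 0`. -/
theorem stmt_6 (K : ℝ) (hK : 0 < K) (y : ℝ → ℝ) (hy0 : y 0 = 1)
    (hy : ∀ t, 0 ≤ t →
      HasDerivAt y ((1 - y t) * K / ((y t) ^ 2 + (1 - (y t) ^ 2) * K) - 1) t) :
    ∀ t, 0 ≤ t →
      Real.exp (-t / min 1 K) ≤ y t ∧ y t ≤ Real.exp (-t / max 1 K) :=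
  fun _ ht => expBounds_of_nonneg hy hK hy0 ht
end

section
/- Let $0 < K_1 < K_2$ and let $y_1, y_2 : [0,\infty) \to (0,1]$ be the solutions of $y_i' = \frac{(1-y_i)K_i}{y_i^2+(1-y_i^2)K_i} - 1$ with $y_i(0)=1$. Then $y_1(t) < y_2(t)$ for all $t > 0$. -/
open Set MeasureTheory intervalIntegral

/-- The right-hand side of the ODE. -/
noncomputable def fK (K w : ℝ) : ℝ := (1 - w) * K / (w ^ 2 + (1 - w ^ 2) * K) - 1

lemma denom_pos {K w : ℝ} (hK : 0 < K) (h0 : 0 < w) (h1 : w ≤ 1) :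
    0 < w ^ 2 + (1 - w ^ 2) * K := by
  nlinarith [mul_pos h0 h0, mul_nonneg (by nlinarith : (0:ℝ) ≤ 1 - w ^ 2) hK.le]

lemma fK_neg {K w : ℝ} (hK : 0 < K) (h0 : 0 < w) (h1 : w ≤ 1) : fK K w < 0 := by
  have hD := denom_pos hK h0 h1
  rw [fK, sub_neg, div_lt_one hD]
  nlinarith

lemma fK_lt_fK {K₁ K₂ w : ℝ} (h1 : 0 < K₁) (h12 : K₁ < K₂) (h0 : 0 < w) (hw : w < 1) :
    fK K₁ w < fK K₂ w := by
  have hD₁ := denom_pos h1 h0 hw.le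
  have hD₂ := denom_pos (h1.trans h12) h0 hw.le
  rw [fK, fK, sub_lt_sub_iff_right, div_lt_div_iff₀ hD₁ hD₂]
  nlinarith [mul_pos (mul_pos (sub_pos.2 hw) (mul_pos h0 h0)) (sub_pos.2 h12)]

lemma fK_contAt {K w : ℝ} (hD : w ^ 2 + (1 - w ^ 2) * K ≠ 0) : ContinuousAt (fK K) w := by
  have : ContinuousAt (fun w : ℝ => (1 - w) * K / (w ^ 2 + (1 - w ^ 2) * K) - 1) w := by
    apply ContinuousAt.sub _ continuousAt_const
    exact ContinuousAt.div (by fun_prop) (by fun_prop) hD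
  exact this

lemma fK_inv_measurable (K : ℝ) : Measurable fun s => (fK K s)⁻¹ := by
  apply Measurable.inv
  apply Measurable.sub _ measurable_const
  exact Measurable.div (by fun_prop) (by fun_prop)

/-- A solution staying in `(0,1]` is strictly below 1 for positive times. -/
lemma lt_one_of_pos {K : ℝ} {y : ℝ → ℝ} (hK : 0 < K)
    (hr : ∀ t, 0 ≤ t → y t ∈ Set.Ioc (0 : ℝ) 1)
    (hy : ∀ t, 0 ≤ t →
      HasDerivAt y ((1 - y t) * K / ((y t) ^ 2 + (1 - (y t) ^ 2) * K) - 1) t)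
    {t : ℝ} (ht : 0 < t) : y t < 1 := by
  rcases lt_or_eq_of_le (hr t ht.le).2 with h | h
  · exact h
  exfalso
  have hmax : IsLocalMax y t := by
    filter_upwards [Ioi_mem_nhds ht] with s hs
    rw [h]
    exact (hr s (le_of_lt hs)).2
  have h0 := hmax.hasDerivAt_eq_zero (hy t ht.le)
  rw [h] at h0
  norm_num at h0

/-- Solutions of `y' = (1-y)K/(y²+(1-y²)K) - 1`, `y(0)=1`, are strictly
monotone increasing in the parameter `K`: if `0 < K₁ < K₂` then `y₁(t) < y₂(t)`
for all `t > 0`. -/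
theorem stmt_8 (K₁ K₂ : ℝ) (hK₁ : 0 < K₁) (hK : K₁ < K₂)
    (y₁ y₂ : ℝ → ℝ)
    (hr₁ : ∀ t, 0 ≤ t → y₁ t ∈ Set.Ioc (0 : ℝ) 1)
    (hr₂ : ∀ t, 0 ≤ t → y₂ t ∈ Set.Ioc (0 : ℝ) 1)
    (hy₁0 : y₁ 0 = 1) (hy₂0 : y₂ 0 = 1)
    (hy₁ : ∀ t, 0 ≤ t →
      HasDerivAt y₁ ((1 - y₁ t) * K₁ / ((y₁ t) ^ 2 + (1 - (y₁ t) ^ 2) * K₁) - 1) t)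
    (hy₂ : ∀ t, 0 ≤ t →
      HasDerivAt y₂ ((1 - y₂ t) * K₂ / ((y₂ t) ^ 2 + (1 - (y₂ t) ^ 2) * K₂) - 1) t) :
    ∀ t, 0 < t → y₁ t < y₂ t := by
  have hK₂ : 0 < K₂ := hK₁.trans hK
  set g : ℝ → ℝ := fun s => (fK K₂ s)⁻¹ with hgdef
  set F : ℝ → ℝ := fun w => ∫ s in (1:ℝ)..w, g s with hFdef
  have hgcont : ∀ w ∈ Set.Ioc (0:ℝ) 1, ContinuousAt g w := by
    intro w hw
    exact (fK_contAt (ne_of_gt (denom_pos hK₂ hw.1 hw.2))).inv₀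
      (ne_of_lt (fK_neg hK₂ hw.1 hw.2))
  have hFderiv : ∀ w ∈ Set.Ioc (0:ℝ) 1, HasDerivAt F (g w) w := by
    intro w hw
    have hint : IntervalIntegrable g volume 1 w := by
      apply ContinuousOn.intervalIntegrable
      intro s hs
      rw [Set.uIcc_of_ge hw.2] at hs
      exact (hgcont s ⟨lt_of_lt_of_le hw.1 hs.1, hs.2⟩).continuousWithinAt
    exact intervalIntegral.integral_hasDerivAt_right hint
      ((fK_inv_measurable K₂).stronglyMeasurable.stronglyMeasurableAtFilter)
      (hgcont w hw)
  have hFanti : StrictAntiOn F (Set.Ioc (0:ℝ) 1) := by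
    apply strictAntiOn_of_deriv_neg (convex_Ioc _ _)
    · intro w hw
      exact (hFderiv w hw).continuousAt.continuousWithinAt
    · intro w hw
      rw [interior_Ioc] at hw
      rw [(hFderiv w ⟨hw.1, hw.2.le⟩).deriv]
      exact inv_lt_zero.2 (fK_neg hK₂ hw.1 hw.2.le)
  set φ : ℝ → ℝ := fun s => F (y₁ s) - F (y₂ s) with hφdef
  have hφderiv : ∀ s, 0 ≤ s →
      HasDerivAt φ (g (y₁ s) * fK K₁ (y₁ s) - g (y₂ s) * fK K₂ (y₂ s)) s := by
    intro s hs
    exact ((hFderiv _ (hr₁ s hs)).comp s (hy₁ s hs)).sub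
      ((hFderiv _ (hr₂ s hs)).comp s (hy₂ s hs))
  have hmono : StrictMonoOn φ (Set.Ici (0:ℝ)) := by
    apply strictMonoOn_of_deriv_pos (convex_Ici _)
    · intro s hs
      exact (hφderiv s hs).continuousAt.continuousWithinAt
    · intro s hs
      rw [interior_Ici] at hs
      rw [(hφderiv s hs.le).deriv]
      have ha := hr₁ s hs.le
      have ha1 : y₁ s < 1 := lt_one_of_pos hK₁ hr₁ hy₁ hs
      have hb := hr₂ s hs.le
      have e2 : g (y₂ s) * fK K₂ (y₂ s) = 1 :=
        inv_mul_cancel₀ (ne_of_lt (fK_neg hK₂ hb.1 hb.2))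
      rw [e2]
      have hf2 : fK K₂ (y₁ s) < 0 := fK_neg hK₂ ha.1 ha.2
      have hf1 : fK K₁ (y₁ s) < fK K₂ (y₁ s) := fK_lt_fK hK₁ hK ha.1 ha1
      have hpos : 0 < (fK K₂ (y₁ s))⁻¹ * (fK K₁ (y₁ s) - fK K₂ (y₁ s)) :=
        mul_pos_of_neg_of_neg (inv_lt_zero.2 hf2) (sub_neg.2 hf1)
      have hcancel : (fK K₂ (y₁ s))⁻¹ * fK K₂ (y₁ s) = 1 :=
        inv_mul_cancel₀ hf2.ne
      nlinarith [hpos, hcancel]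
  intro t ht
  have hφ0 : φ 0 = 0 := by simp [hφdef, hy₁0, hy₂0]
  have hφpos : 0 < φ t := by
    have := hmono (Set.self_mem_Ici) (Set.mem_Ici.2 ht.le) ht
    linarith [hφ0 ▸ this]
  by_contra hcon
  push_neg at hcon
  have hy1t := hr₁ t ht.le
  have hy2t := hr₂ t ht.le
  have hle : F (y₁ t) ≤ F (y₂ t) := by
    rcases lt_or_eq_of_le hcon with h | h
    · exact (hFanti hy2t hy1t h).le
    · rw [h]
  have : φ t ≤ 0 := by simp only [hφdef]; linarith
  linarith
end

section
/- Let $K > 1$ and let $y(t)$ be the solution of $y' = \frac{(1-y)K}{y^2+(1-y^2)K}-1$, $y(0)=1$, which satisfies $y(t)>0$ for all $t \geq 0$. Then $c(t) := \frac{K}{y(t)^2+(1-y(t)^2)K} > 1$ for all $t \geq 0$ with $y(t) > 0$, and consequently the solution $z$ of $z' = c(t)(z^2-1)+1$, $z(0)=1$, satisfies $z(t) \geq 1/(1-t)$ for $t \in [0,1)$, so $z$ blows up at some time $t_c \leq 1$. -/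
/-!
At `y = 1` the equation for `y` gives `y' = -1`, so `y` never rises above `1`; for `0 < y ≤ 1`
the denominator `y² + (1 - y²)K = K - y²(K - 1)` lies in `(0, K)`, whence `c > 1`.
For `0 ≤ l < 1` the function `w x = (1 - l x)⁻¹ ≥ 1` satisfies `w' = l w² < w² ≤ c (w² - 1) + 1`,
so it is a strict subsolution of the Riccati equation for `z` starting at `1`, and stays below `z`.
Letting `l → 1` gives `z t ≥ 1/(1 - t)`.
-/

open Set Filter Topology

theorem le_of_hasDerivAt_of_deriv_neg_of_eq {f f' : ℝ → ℝ} {a b : ℝ}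
    (hf : ∀ x, a ≤ x → HasDerivAt f (f' x) x) (ha : f a ≤ b)
    (hb : ∀ x, a ≤ x → f x = b → f' x < 0) {x : ℝ} (hx : a ≤ x) : f x ≤ b :=
  image_le_of_deriv_right_lt_deriv_boundary' (B := fun _ => b) (B' := fun _ => 0)
    (fun u hu => (hf u hu.1).continuousAt.continuousWithinAt)
    (fun u hu => (hf u hu.1).hasDerivWithinAt) ha continuousOn_const
    (fun u _ => (hasDerivAt_const u b).hasDerivWithinAt) (fun u hu => hb u hu.1)
    (right_mem_Icc.2 hx)

theorem one_lt_div_sq_add_one_sub_sq_mul {K u : ℝ} (hK : 1 < K) (hu0 : 0 < u) (hu1 : u ≤ 1) :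
    1 < K / (u ^ 2 + (1 - u ^ 2) * K) := by
  have hden : u ^ 2 + (1 - u ^ 2) * K = K - u ^ 2 * (K - 1) := by ring
  have hsq_pos : 0 < u ^ 2 * (K - 1) := mul_pos (pow_pos hu0 2) (by linarith)
  have hsq_le : u ^ 2 * (K - 1) ≤ K - 1 :=
    mul_le_of_le_one_left (by linarith) (pow_le_one₀ hu0.le hu1)
  rw [hden, one_lt_div (by linarith)]
  linarith

theorem hasDerivAt_inv_one_sub_mul {l x : ℝ} (hx : 1 - l * x ≠ 0) :
    HasDerivAt (fun u => (1 - l * u)⁻¹) (l * ((1 - l * x)⁻¹) ^ 2) x := by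
  have h := ((hasDerivAt_id x).const_mul l).const_sub 1 |>.inv hx
  refine h.congr_deriv ?_
  simp only [id, mul_one, neg_neg, inv_pow]
  ring

section Riccati

variable {c z : ℝ → ℝ} {T : ℝ}

theorem inv_one_sub_mul_le_of_riccati (hc : ∀ x, 0 ≤ x → x < T → 1 ≤ c x) (hz0 : 1 ≤ z 0)
    (hz : ∀ x, 0 ≤ x → x < T → HasDerivAt z (c x * (z x ^ 2 - 1) + 1) x)
    {l t : ℝ} (hl0 : 0 ≤ l) (hl1 : l < 1) (ht0 : 0 ≤ t) (ht : t < min T 1) :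
    (1 - l * t)⁻¹ ≤ z t := by
  obtain ⟨htT, ht1⟩ := lt_min_iff.1 ht
  have hden : ∀ x ∈ Icc 0 t, 0 < 1 - l * x ∧ 1 - l * x ≤ 1 := fun x hx =>
    ⟨by nlinarith [hx.1, hx.2], by nlinarith [hx.1]⟩
  refine image_le_of_deriv_right_lt_deriv_boundary' (f' := fun x => l * ((1 - l * x)⁻¹) ^ 2)
    (fun x hx => (hasDerivAt_inv_one_sub_mul (hden x hx).1.ne').continuousAt.continuousWithinAt)
    (fun x hx => (hasDerivAt_inv_one_sub_mul (hden x (Ico_subset_Icc_self hx)).1.ne').hasDerivWithinAt)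
    (by simpa using hz0)
    (fun x hx => (hz x hx.1 (hx.2.trans_lt htT)).continuousAt.continuousWithinAt)
    (fun x hx => (hz x hx.1 (hx.2.trans htT)).hasDerivWithinAt) ?_ (right_mem_Icc.2 ht0)
  intro x hx hwz
  obtain ⟨hpos, hle⟩ := hden x (Ico_subset_Icc_self hx)
  set w := (1 - l * x)⁻¹
  have hw1 : 1 ≤ w := one_le_inv₀ hpos |>.2 hle
  have hcx := hc x hx.1 (hx.2.trans htT)
  have hw_sq : 1 ≤ w ^ 2 := one_le_pow₀ hw1
  calc l * w ^ 2 < w ^ 2 := mul_lt_of_lt_one_left (by positivity) hl1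
    _ ≤ c x * (z x ^ 2 - 1) + 1 := by
      rw [← hwz]; nlinarith [mul_le_mul_of_nonneg_right hcx (sub_nonneg.2 hw_sq)]

theorem one_div_one_sub_le_of_riccati (hc : ∀ x, 0 ≤ x → x < T → 1 ≤ c x) (hz0 : 1 ≤ z 0)
    (hz : ∀ x, 0 ≤ x → x < T → HasDerivAt z (c x * (z x ^ 2 - 1) + 1) x)
    {t : ℝ} (ht0 : 0 ≤ t) (ht : t < min T 1) : 1 / (1 - t) ≤ z t := by
  have ht1 : 1 - 1 * t ≠ 0 := by linarith [(lt_min_iff.1 ht).2]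
  have hlim : Tendsto (fun l : ℝ => (1 - l * t)⁻¹) (𝓝[<] 1) (𝓝 (1 / (1 - t))) := by
    have h : ContinuousAt (fun l : ℝ => (1 - l * t)⁻¹) 1 := by fun_prop (disch := exact ht1)
    simpa using h.tendsto.mono_left nhdsWithin_le_nhds
  refine le_of_tendsto hlim ?_
  filter_upwards [Ioo_mem_nhdsLT (zero_lt_one' ℝ)] with l hl
  exact inv_one_sub_mul_le_of_riccati hc hz0 hz hl.1.le hl.2 ht0 ht

end Riccati

/-- For `K > 1`: the coefficient `c(t) = K/(y(t)² + (1-y(t)²)K)` exceeds `1`,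
and consequently any solution `z` of `z' = c(t)(z²-1)+1`, `z(0)=1`, satisfies
`z(t) ≥ 1/(1-t)` wherever it is defined; hence `z` blows up by time `1`. -/
theorem stmt_11 (K : ℝ) (hK : 1 < K) (y : ℝ → ℝ) (hy0 : y 0 = 1)
    (hypos : ∀ t, 0 ≤ t → 0 < y t)
    (hy : ∀ t, 0 ≤ t →
      HasDerivAt y ((1 - y t) * K / ((y t) ^ 2 + (1 - (y t) ^ 2) * K) - 1) t) :
    (∀ t, 0 ≤ t → 1 < K / ((y t) ^ 2 + (1 - (y t) ^ 2) * K)) ∧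
    ∀ (T : ℝ) (z : ℝ → ℝ), z 0 = 1 →
      (∀ t, 0 ≤ t → t < T →
        HasDerivAt z
          (K / ((y t) ^ 2 + (1 - (y t) ^ 2) * K) * ((z t) ^ 2 - 1) + 1) t) →
      ∀ t, 0 ≤ t → t < min T 1 → 1 / (1 - t) ≤ z t := by
  have hy_le_one : ∀ t, 0 ≤ t → y t ≤ 1 := fun t ht =>
    le_of_hasDerivAt_of_deriv_neg_of_eq hy hy0.le (fun x _ hx => by rw [hx]; norm_num) ht
  have hc : ∀ t, 0 ≤ t → 1 < K / ((y t) ^ 2 + (1 - (y t) ^ 2) * K) := fun t ht =>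
    one_lt_div_sq_add_one_sub_sq_mul hK (hypos t ht) (hy_le_one t ht)
  refine ⟨hc, fun T z hz0 hz t ht htT => ?_⟩
  exact one_div_one_sub_le_of_riccati (c := fun t => K / ((y t) ^ 2 + (1 - (y t) ^ 2) * K))
    (fun x hx _ => (hc x hx).le) hz0.ge hz ht htT
end

section
/- Let $0 < K < 1$, let $y(t)$ be the solution of $y' = f(y) := \frac{(1-y)K}{y^2+(1-y^2)K}-1$, $y(0)=1$, and let $t^* > 0$ be such that $y(t^*) = \sqrt{K}$. Then $t^* \leq \left(\frac{1}{1-\sqrt{K}} - \frac{1}{2-K}\right)^{-1} \leq 2$. -/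
/-- For `0 < K < 1`, if `y` solves `y' = (1-y)K/(y²+(1-y²)K) - 1`, `y(0)=1`,
and `t* > 0` is such that `y(t*) = √K`, then
`t* ≤ (1/(1-√K) - 1/(2-K))⁻¹ ≤ 2`. -/
theorem stmt_13 (K : ℝ) (hK0 : 0 < K) (hK1 : K < 1) (y : ℝ → ℝ) (hy0 : y 0 = 1)
    (hy : ∀ t, 0 ≤ t →
      HasDerivAt y ((1 - y t) * K / ((y t) ^ 2 + (1 - (y t) ^ 2) * K) - 1) t)
    (tstar : ℝ) (htpos : 0 < tstar) (hyt : y tstar = Real.sqrt K) :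
    tstar ≤ (1 / (1 - Real.sqrt K) - 1 / (2 - K))⁻¹ ∧
    (1 / (1 - Real.sqrt K) - 1 / (2 - K))⁻¹ ≤ 2 := by
  set s := Real.sqrt K with hs
  have hsK : s ^ 2 = K := Real.sq_sqrt hK0.le
  have hs0 : 0 < s := Real.sqrt_pos.2 hK0
  have hs1 : s < 1 := by
    nlinarith [hsK]
  -- Step A: y t ≥ s on [0, tstar]
  have hlow : ∀ t ∈ Set.Icc (0:ℝ) tstar, s ≤ y t := by
    by_contra h
    push_neg at h
    obtain ⟨τ, hτ, hyτ⟩ := h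
    set m : ℝ := (max 0 (y τ) + s) / 2 with hm
    have hm0 : 0 < m := by
      have := le_max_left 0 (y τ); simp only [hm]; positivity
    have hms : m < s := by
      have h1 : max 0 (y τ) < s := max_lt hs0 hyτ
      simp only [hm]; linarith
    have hyτm : y τ < m := by
      have := le_max_right 0 (y τ)
      simp only [hm]; linarith [max_lt hs0 hyτ]
    have hcont : ∀ t ∈ Set.Icc τ tstar, ContinuousAt y t := by
      intro t ht
      exact (hy t (le_trans hτ.1 ht.1)).differentiableAt.continuousAt
    set S : Set ℝ := {t ∈ Set.Icc τ tstar | y t ≤ m} with hS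
    have hSne : S.Nonempty := ⟨τ, ⟨le_refl τ, hτ.2⟩, hyτm.le⟩
    have hSbdd : BddAbove S := ⟨tstar, fun t ht => ht.1.2⟩
    have hSclosed : IsClosed S := by
      have : ContinuousOn y (Set.Icc τ tstar) :=
        fun t ht => (hcont t ht).continuousWithinAt
      exact ContinuousOn.preimage_isClosed_of_isClosed this isClosed_Icc isClosed_Iic
    set t₂ := sSup S with ht₂
    have ht₂S : t₂ ∈ S := hSclosed.csSup_mem hSne hSbdd
    have ht₂I : t₂ ∈ Set.Icc τ tstar := ht₂S.1
    have ht₂m : y t₂ ≤ m := ht₂S.2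
    have ht₂lt : t₂ < tstar := by
      rcases lt_or_eq_of_le ht₂I.2 with h | h
      · exact h
      · exfalso; rw [h, hyt] at ht₂m; linarith
    have h3 : ∀ t, t₂ < t → t ≤ tstar → m < y t := by
      intro t h1 h2
      by_contra hc
      push_neg at hc
      have : t ∈ S := ⟨⟨le_trans ht₂I.1 h1.le, h2⟩, hc⟩
      exact absurd (le_csSup hSbdd this) (not_le.2 h1)
    have ht₂0 : 0 ≤ t₂ := le_trans hτ.1 ht₂I.1
    -- y t₂ = m by right continuity
    have hym : y t₂ = m := by
      refine le_antisymm ht₂m ?_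
      have htd : Filter.Tendsto y (nhdsWithin t₂ (Set.Ioi t₂)) (nhds (y t₂)) :=
        ((hy t₂ ht₂0).differentiableAt.continuousAt).tendsto.mono_left nhdsWithin_le_nhds
      refine ge_of_tendsto htd ?_
      filter_upwards [Ioo_mem_nhdsGT_of_mem ⟨le_refl t₂, ht₂lt⟩] with t ht
      exact (h3 t ht.1 ht.2.le).le
    -- derivative at t₂ is negative
    have hden : 0 < m ^ 2 + (1 - m ^ 2) * K := by nlinarith [sq_nonneg m]
    have hdneg : (1 - m) * K / (m ^ 2 + (1 - m ^ 2) * K) - 1 < 0 := by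
      rw [sub_neg, div_lt_one hden]; nlinarith
    have hd : HasDerivAt y ((1 - m) * K / (m ^ 2 + (1 - m ^ 2) * K) - 1) t₂ := by
      have := hy t₂ ht₂0; rwa [hym] at this
    -- but right slope is nonneg
    have hdw := (hd.hasDerivWithinAt (s := Set.Ioi t₂))
    rw [hasDerivWithinAt_iff_tendsto_slope] at hdw
    have hset : Set.Ioi t₂ \ {t₂} = Set.Ioi t₂ := by
      apply Set.diff_singleton_eq_self; simp
    rw [hset] at hdw
    have hge : 0 ≤ (1 - m) * K / (m ^ 2 + (1 - m ^ 2) * K) - 1 := by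
      refine ge_of_tendsto hdw ?_
      filter_upwards [Ioo_mem_nhdsGT_of_mem ⟨le_refl t₂, ht₂lt⟩] with t ht
      have : m < y t := h3 t ht.1 ht.2.le
      rw [slope_def_field]
      have h4 : 0 < t - t₂ := sub_pos.2 ht.1
      apply div_nonneg _ h4.le
      rw [hym]; linarith
    linarith
  -- Step B: derivative bound and antitone argument
  set C : ℝ := (1 - s) / (2 - s ^ 2) - 1 with hC
  have h2s : (0:ℝ) < 2 - s ^ 2 := by nlinarith
  have hderC : ∀ u : ℝ, s ≤ u →
      (1 - u) * K / (u ^ 2 + (1 - u ^ 2) * K) - 1 ≤ C := by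
    intro u hu
    have hu0 : 0 < u := lt_of_lt_of_le hs0 hu
    have hdenu : 0 < u ^ 2 + (1 - u ^ 2) * K := by nlinarith [sq_nonneg u]
    have key : (1 - u) * K / (u ^ 2 + (1 - u ^ 2) * K) ≤ (1 - s) / (2 - s ^ 2) := by
      rw [div_le_div_iff₀ hdenu h2s, ← hsK]
      have h2 : (0:ℝ) ≤ (1-s)*(1-s^2)*u + s*(1+s-s^2) := by
        have : (0:ℝ) ≤ (1-s)*(1-s^2)*u :=
          mul_nonneg (mul_nonneg (by linarith) (by nlinarith)) hu0.le
        nlinarith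
      nlinarith [mul_nonneg (sub_nonneg.2 hu) h2, hsK]
    simp only [hC]; linarith
  set g : ℝ → ℝ := fun t => y t - C * t with hg
  have hganti : AntitoneOn g (Set.Icc 0 tstar) := by
    apply antitoneOn_of_deriv_nonpos (convex_Icc 0 tstar)
    · intro t ht
      exact (((hy t ht.1).sub ((hasDerivAt_id t).const_mul C)).continuousAt).continuousWithinAt
    · intro t ht
      rw [interior_Icc] at ht
      exact (((hy t ht.1.le).sub ((hasDerivAt_id t).const_mul C))).differentiableAt.differentiableWithinAt
    · intro t ht
      rw [interior_Icc] at ht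
      have hgd : HasDerivAt g ((1 - y t) * K / ((y t) ^ 2 + (1 - (y t) ^ 2) * K) - 1 - C * 1) t :=
        (hy t ht.1.le).sub ((hasDerivAt_id t).const_mul C)
      rw [hgd.deriv]
      have := hderC (y t) (hlow t ⟨ht.1.le, ht.2.le⟩)
      linarith
  have hkey : s - C * tstar ≤ 1 := by
    have := hganti (Set.left_mem_Icc.2 htpos.le) ⟨htpos.le, le_refl tstar⟩ htpos.le
    simp only [hg, hy0, hyt] at this
    simpa using this
  -- final algebra
  have hs1' : (0:ℝ) < 1 - s := by linarith
  rw [show K = s ^ 2 from hsK.symm]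
  set c : ℝ := 1 / (1 - s) - 1 / (2 - s ^ 2) with hc
  have hcC : c * (1 - s) = -C := by
    simp only [hc, hC]
    field_simp
    ring
  have hc0 : 0 < c := by
    have h1 : 1 < 1 / (1 - s) := by
      rw [lt_div_iff₀ hs1']; linarith
    have h2 : 1 / (2 - s ^ 2) < 1 := by
      rw [div_lt_one h2s]; nlinarith
    simp only [hc]; linarith
  constructor
  · have h5 : c * (1 - s) * tstar ≤ 1 - s := by rw [hcC]; nlinarith
    have h6 : c * tstar ≤ 1 :=
      le_of_mul_le_mul_right (by nlinarith : c * tstar * (1 - s) ≤ 1 * (1 - s)) hs1'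
    have : tstar ≤ 1 / c := (le_div_iff₀ hc0).mpr (by linarith [mul_comm c tstar])
    rwa [one_div] at this
  · have h12 : (1:ℝ)/2 ≤ c := by
      have hden2 : (0:ℝ) < (1 - s) * (2 - s ^ 2) := mul_pos hs1' h2s
      have hcval : c = (1 + s - s ^ 2) / ((1 - s) * (2 - s ^ 2)) := by
        simp only [hc]; field_simp; ring
      rw [hcval, div_le_div_iff₀ two_pos hden2]
      nlinarith [mul_nonneg hs0.le (mul_nonneg hs0.le hs0.le)]
    calc c⁻¹ = 1 / c := (one_div c).symm
      _ ≤ 1 / (1/2) := one_div_le_one_div_of_le (by norm_num) h12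
      _ = 2 := by norm_num
end
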